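/- arXiv:2405.09635 — 4 statements merged into one kernel-verified Lean document; each statement's English description precedes it below -/
import Mathlib

section
/- In a finite poset P whose Hasse diagram is a tree, every nonempty interval {z ∈ P : x ≤ z ≤ y} (for x, y ∈ P with x ≤ y) is a chain, i.e., any two elements of the interval are comparable. -/
/-- The Hasse diagram of a poset: vertices are the elements, with an edge between
`u` and `v` whenever one covers the other. -/
def hasse (P : Type*) [PartialOrder P] : SimpleGraph P where
  Adj u v := u ⋖ v ∨ v ⋖ u
  symm := ⟨fun u v h => Or.symm h⟩
  loopless := by
    constructor
    intro u h
    rcases h with h | h <;> exact absurd h.lt (lt_irrefl u)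

/-!
If `x ≤ y` then, by finiteness, `x` and `y` are joined by a saturated chain, which is an
ascending path in the Hasse diagram. For `z, w ∈ [x, y]`, concatenating saturated chains
`x → z → y` and `x → w → y` gives two paths from `x` to `y`; in a tree they coincide, so `w`
lies on the ascending path through `z`, either before `z` or after it.
-/

namespace SimpleGraph.Walk

variable {V : Type*} [PartialOrder V] {G : SimpleGraph V}

def IsAscending {u v : V} (p : G.Walk u v) : Prop :=
  ∀ d ∈ p.darts, d.fst < d.snd

@[simp]
theorem isAscending_nil {u : V} : (nil : G.Walk u u).IsAscending := by
  simp [IsAscending]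

@[simp]
theorem isAscending_cons_iff {u v w : V} (h : G.Adj u v) (p : G.Walk v w) :
    (cons h p).IsAscending ↔ u < v ∧ p.IsAscending := by
  simp only [IsAscending, darts_cons, List.forall_mem_cons]

theorem IsAscending.append {u v w : V} {p : G.Walk u v} {q : G.Walk v w}
    (hp : p.IsAscending) (hq : q.IsAscending) : (p.append q).IsAscending := by
  simpa only [IsAscending, darts_append, List.forall_mem_append] using And.intro hp hq

theorem IsAscending.mem_Icc_of_mem_support {u v w : V} {p : G.Walk u v}
    (hp : p.IsAscending) (hw : w ∈ p.support) : w ∈ Set.Icc u v := by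
  induction p generalizing w with
  | nil => simp_all
  | cons _ p ih =>
    obtain ⟨hlt, hp'⟩ := (isAscending_cons_iff _ _).mp hp
    rcases List.mem_cons.mp (support_cons _ _ ▸ hw) with rfl | hw
    · exact ⟨le_rfl, hlt.le.trans (ih hp' p.end_mem_support).1⟩
    · exact ⟨hlt.le.trans (ih hp' hw).1, (ih hp' hw).2⟩

theorem IsAscending.isPath {u v : V} {p : G.Walk u v} (hp : p.IsAscending) : p.IsPath := by
  induction p with
  | nil => exact .nil
  | cons _ p ih =>
    obtain ⟨hlt, hp⟩ := (isAscending_cons_iff _ _).mp hp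
    exact (ih hp).cons fun hu => (hlt.trans_le (hp.mem_Icc_of_mem_support hu).1).false

end SimpleGraph.Walk

theorem hasse_exists_isAscending_walk {P : Type*} [PartialOrder P] [WellFoundedGT P]
    [IsStronglyAtomic P] {x y : P} (hxy : x ≤ y) : ∃ p : (hasse P).Walk x y, p.IsAscending := by
  induction x using WellFoundedGT.induction with
  | _ x ih =>
    rcases hxy.eq_or_lt with rfl | hlt
    · exact ⟨.nil, SimpleGraph.Walk.isAscending_nil⟩
    obtain ⟨z, hxz, hzy⟩ := exists_covBy_le_of_lt hlt
    obtain ⟨p, hp⟩ := ih z hxz.lt hzy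
    exact ⟨.cons (Or.inl hxz) p,
      (SimpleGraph.Walk.isAscending_cons_iff _ _).mpr ⟨hxz.lt, hp⟩⟩

/-- In a finite poset whose Hasse diagram is a tree, every interval
`{z : x ≤ z ≤ y}` is a chain: any two of its elements are comparable. -/
theorem stmt2 {P : Type*} [PartialOrder P] [Fintype P] (h : (hasse P).IsTree) :
    ∀ x y : P, x ≤ y → ∀ z ∈ Set.Icc x y, ∀ w ∈ Set.Icc x y, z ≤ w ∨ w ≤ z := by
  intro x y _ z hz w hw
  obtain ⟨p₁, hp₁⟩ := hasse_exists_isAscending_walk hz.1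
  obtain ⟨p₂, hp₂⟩ := hasse_exists_isAscending_walk hz.2
  obtain ⟨q₁, hq₁⟩ := hasse_exists_isAscending_walk hw.1
  obtain ⟨q₂, hq₂⟩ := hasse_exists_isAscending_walk hw.2
  have hpq : p₁.append p₂ = q₁.append q₂ :=
    congrArg Subtype.val <| (h.isAcyclic.subsingleton_path x y).elim
      ⟨_, (hp₁.append hp₂).isPath⟩ ⟨_, (hq₁.append hq₂).isPath⟩
  have hw_mem : w ∈ (p₁.append p₂).support := hpq ▸
    (SimpleGraph.Walk.mem_support_append_iff _ _).mpr (Or.inl q₁.end_mem_support)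
  rcases (SimpleGraph.Walk.mem_support_append_iff _ _).mp hw_mem with hw₁ | hw₂
  · exact .inr (hp₁.mem_Icc_of_mem_support hw₁).2
  · exact .inl (hp₂.mem_Icc_of_mem_support hw₂).1
end

section
/- Let k ≥ 1 and a ≥ 1 be integers and ε > 0. If F ⊆ 2^[n] is a set system with |F| > ((k-1)·a + ε)·C(n, ⌊n/2⌋), then the number of (k,a)-marked chains whose markers all lie in F is at least (ε/k)·n!. -/
/-!
A maximal chain is encoded by a permutation `σ`, its member of size `c` being
`σ '' {0, …, c - 1}`. A set `A` lies on exactly `|A|! (n - |A|)! ≥ n! / C(n, ⌊n/2⌋)`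
chains, so summed over all chains the members of `F` on a chain number at least
`|F| n! / C(n, ⌊n/2⌋) > ((k - 1) a + ε) n!`. If a chain carries `m` members of `F`, of sizes
`c₀ < ⋯ < c_{m-1}`, then each `t < m - (k - 1) a` yields the marked chain with markers of sizes
`c_{t + (k-1) a} > ⋯ > c_{t + a} > c_t`, and consecutive markers differ by at least `a`
elements because the `cⱼ` are distinct integers. Hence there are more than
`ε n! ≥ (ε / k) n!` marked chains.
-/

def memChain {n : ℕ} (σ : Equiv.Perm (Fin n)) (A : Finset (Fin n)) : Prop :=
  A = Finset.image σ (Finset.univ.filter (fun j => (j : ℕ) < A.card))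

open Finset

section PermImage
variable {α : Type*} [DecidableEq α]

lemma mem_iff_apply_mem_of_image_eq {s t : Finset α} {σ : Equiv.Perm α} (h : s.image σ = t)
    (x : α) : x ∈ s ↔ σ x ∈ t := by
  rw [← h, σ.injective.mem_finset_image]

variable [Fintype α]

def permImageEquiv (s t : Finset α) :
    {σ : Equiv.Perm α // s.image σ = t} ≃
      ({x // x ∈ s} ≃ {x // x ∈ t}) × ({x // x ∉ s} ≃ {x // x ∉ t}) where
  toFun σ := (σ.1.subtypeEquiv (mem_iff_apply_mem_of_image_eq σ.2),
    σ.1.subtypeEquiv fun x => (mem_iff_apply_mem_of_image_eq σ.2 x).not)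
  invFun ef := ⟨Equiv.subtypeCongr ef.1 ef.2, by
    refine eq_of_subset_of_card_le (fun y hy => ?_) ?_
    · obtain ⟨x, hx, rfl⟩ := mem_image.1 hy
      simp [Equiv.subtypeCongr, hx]
    · rw [card_image_of_injective _ (Equiv.injective _), ← Fintype.card_coe s,
        ← Fintype.card_coe t, Fintype.card_congr ef.1]⟩
  left_inv σ := by ext x; by_cases hx : x ∈ s <;> simp [Equiv.subtypeCongr, hx]
  right_inv ef := by ext x <;> simp [Equiv.subtypeCongr, x.2]

theorem card_perm_image_eq {s t : Finset α} (h : #s = #t) :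
    Fintype.card {σ : Equiv.Perm α // s.image σ = t} =
      (#s).factorial * (Fintype.card α - #s).factorial := by
  have hst : Fintype.card {x // x ∈ s} = Fintype.card {x // x ∈ t} := by simp [h]
  have hst' : Fintype.card {x // x ∉ s} = Fintype.card {x // x ∉ t} := by
    simp [Fintype.card_subtype_compl, h]
  rw [Fintype.card_congr (permImageEquiv s t), Fintype.card_prod,
    Fintype.card_equiv (Fintype.equivOfCardEq hst),
    Fintype.card_equiv (Fintype.equivOfCardEq hst'), Fintype.card_coe,
    Fintype.card_subtype_compl, Fintype.card_coe]

end PermImage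

lemma add_le_of_strictMono {m d : ℕ} {f : Fin m → ℕ} (hf : StrictMono f) {i j : Fin m}
    (hij : (j : ℕ) = i + d) : f i + d ≤ f j := by
  induction d generalizing j with
  | zero => simp [Fin.ext hij]
  | succ d ih =>
    have hlt : (i : ℕ) + d < m := by omega
    have := hf (show (⟨i + d, hlt⟩ : Fin m) < j from Fin.lt_def.2 (by simp; omega))
    have := ih (j := ⟨i + d, hlt⟩) rfl
    omega

section Chains
variable {n : ℕ}

def chainSet (σ : Equiv.Perm (Fin n)) (c : ℕ) : Finset (Fin n) :=
  (univ.filter fun j : Fin n => (j : ℕ) < c).image σ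

lemma memChain_iff {σ : Equiv.Perm (Fin n)} {A : Finset (Fin n)} :
    memChain σ A ↔ A = chainSet σ #A := Iff.rfl

instance (σ : Equiv.Perm (Fin n)) (A : Finset (Fin n)) : Decidable (memChain σ A) :=
  decidable_of_iff _ memChain_iff.symm

variable (σ : Equiv.Perm (Fin n)) {c c' : ℕ}

lemma card_chainSet (hc : c ≤ n) : #(chainSet σ c) = c := by
  rw [chainSet, card_image_of_injective _ σ.injective, Fin.card_filter_val_lt, min_eq_right hc]

lemma memChain_chainSet (hc : c ≤ n) : memChain σ (chainSet σ c) := by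
  rw [memChain_iff, card_chainSet σ hc]

lemma chainSet_mono (h : c ≤ c') : chainSet σ c ⊆ chainSet σ c' :=
  image_subset_image (monotone_filter_right _ fun _ _ hj => lt_of_lt_of_le hj h)

lemma chainSet_ssubset (h : c < c') (hc' : c' ≤ n) : chainSet σ c ⊂ chainSet σ c' :=
  (chainSet_mono σ h.le).ssubset_of_ne fun heq => by
    have := card_chainSet σ (h.le.trans hc')
    rw [heq, card_chainSet σ hc'] at this
    omega

lemma card_chainSet_sdiff (h : c ≤ c') (hc' : c' ≤ n) :
    #(chainSet σ c' \ chainSet σ c) = c' - c := by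
  rw [card_sdiff_of_subset (chainSet_mono σ h), card_chainSet σ hc',
    card_chainSet σ (h.trans hc')]

end Chains

section Counting
variable {n : ℕ}

lemma card_memChain (A : Finset (Fin n)) :
    #{σ : Equiv.Perm (Fin n) | memChain σ A} = (#A).factorial * (n - #A).factorial := by
  have hcard : #(univ.filter fun j : Fin n => (j : ℕ) < #A) = #A := by
    rw [Fin.card_filter_val_lt, min_eq_right (by simpa using card_le_univ A)]
  have h := card_perm_image_eq hcard
  rw [Fintype.card_fin, hcard] at h
  rw [← Fintype.card_subtype, ← h]
  exact Fintype.card_congr (Equiv.subtypeEquivRight fun σ => eq_comm)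

lemma factorial_le_choose_middle_mul (A : Finset (Fin n)) :
    n.factorial ≤ n.choose (n / 2) * ((#A).factorial * (n - #A).factorial) := by
  have hA : #A ≤ n := by simpa using card_le_univ A
  calc n.factorial = n.choose #A * ((#A).factorial * (n - #A).factorial) := by
        rw [← mul_assoc, Nat.choose_mul_factorial_mul_factorial hA]
    _ ≤ _ := Nat.mul_le_mul_right _ (Nat.choose_le_middle _ _)

theorem card_mul_factorial_le_sum_card_memChain (F : Finset (Finset (Fin n))) :
    #F * n.factorial ≤
      n.choose (n / 2) * ∑ σ : Equiv.Perm (Fin n), #{A ∈ F | memChain σ A} := by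
  calc #F * n.factorial = ∑ A ∈ F, n.factorial := by rw [sum_const, smul_eq_mul]
    _ ≤ ∑ A ∈ F, n.choose (n / 2) * #{σ : Equiv.Perm (Fin n) | memChain σ A} :=
        sum_le_sum fun A _ => by rw [card_memChain]; exact factorial_le_choose_middle_mul A
    _ = _ := by
        simp_rw [← mul_sum, card_filter]
        rw [sum_comm]

end Counting

section Markers
variable {n : ℕ} (F : Finset (Finset (Fin n))) (a : ℕ)

def IsMarkedChain {k : ℕ} (σ : Equiv.Perm (Fin n)) (g : Fin k → Finset (Fin n)) : Prop :=
  (∀ i, memChain σ (g i)) ∧ (∀ i, g i ∈ F) ∧ (∀ i j : Fin k, i < j → g j ⊂ g i) ∧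
    ∀ i j : Fin k, (j : ℕ) = (i : ℕ) + 1 → a ≤ #(g i \ g j)

def chainSizes (σ : Equiv.Perm (Fin n)) : Finset ℕ := {A ∈ F | memChain σ A}.image card

lemma card_chainSizes (σ : Equiv.Perm (Fin n)) :
    #(chainSizes F σ) = #{A ∈ F | memChain σ A} := by
  refine card_image_of_injOn fun A hA B hB hAB => ?_
  simp only [coe_filter, Set.mem_ofPred_eq] at hA hB
  calc A = chainSet σ #A := hA.2
    _ = chainSet σ #B := by rw [hAB]
    _ = B := hB.2.symm

lemma chainSet_mem_of_mem_chainSizes {σ : Equiv.Perm (Fin n)} {c : ℕ}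
    (hc : c ∈ chainSizes F σ) : c ≤ n ∧ chainSet σ c ∈ F := by
  obtain ⟨A, hA, rfl⟩ := mem_image.1 hc
  rw [mem_filter] at hA
  refine ⟨by simpa using card_le_univ A, ?_⟩
  rw [← memChain_iff.1 hA.2]
  exact hA.1

theorem card_chainSizes_sub_le_card_isMarkedChain {k : ℕ} (ha : 1 ≤ a)
    (σ : Equiv.Perm (Fin n)) :
    #(chainSizes F σ) - k * a ≤
      Nat.card {g : Fin (k + 1) → Finset (Fin n) // IsMarkedChain F a σ g} := by
  set S := chainSizes F σ
  set f := S.orderEmbOfFin rfl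
  have hidx (t : Fin (#S - k * a)) (i : Fin (k + 1)) : (t : ℕ) + i.rev * a < #S := by
    have := Nat.mul_le_mul_right a (Nat.lt_succ_iff.1 i.rev.2)
    omega
  -- marker `i` of the `t`-th marked chain has size `c_{t + (k - i) a}`
  set size : Fin (#S - k * a) → Fin (k + 1) → ℕ := fun t i => f ⟨t + i.rev * a, hidx t i⟩
  have hsize (t i) : size t i ≤ n ∧ chainSet σ (size t i) ∈ F :=
    chainSet_mem_of_mem_chainSizes F (S.orderEmbOfFin_mem rfl _)
  have marked (t) : IsMarkedChain F a σ fun i => chainSet σ (size t i) := by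
    refine ⟨fun i => memChain_chainSet σ (hsize t i).1, fun i => (hsize t i).2,
      fun i j hij => chainSet_ssubset σ (f.strictMono ?_) (hsize t i).1, fun i j hij => ?_⟩
    · have : (j.rev : ℕ) < i.rev := Fin.rev_lt_rev.2 hij
      simp only [Fin.mk_lt_mk]
      nlinarith
    · have hrev : (i.rev : ℕ) = j.rev + 1 := by simp [Fin.val_rev]; omega
      have hgap : size t j + a ≤ size t i :=
        add_le_of_strictMono f.strictMono (by simp only [hrev]; ring)
      rw [card_chainSet_sdiff σ (by omega) (hsize t i).1]
      omega
  have inj : Function.Injective fun t => (⟨_, marked t⟩ : {g // IsMarkedChain F a σ g}) := by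
    intro t t' h
    have hcard := congrArg (fun g => #(g.1 (Fin.last k))) h
    simp only [card_chainSet σ (hsize t _).1, card_chainSet σ (hsize t' _).1] at hcard
    simpa [Fin.ext_iff] using f.injective hcard
  simpa using Nat.card_le_card_of_injective _ inj

theorem sum_card_chainSizes_sub_le_card_isMarkedChain {k : ℕ} (ha : 1 ≤ a) :
    ∑ σ, (#(chainSizes F σ) - k * a) ≤
      Nat.card {p : Equiv.Perm (Fin n) × (Fin (k + 1) → Finset (Fin n)) //
        IsMarkedChain F a p.1 p.2} := by
  rw [Nat.card_congr (Equiv.subtypeProdEquivSigmaSubtype fun σ g => IsMarkedChain F a σ g),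
    Nat.card_sigma]
  exact sum_le_sum fun σ _ => card_chainSizes_sub_le_card_isMarkedChain F a ha σ

theorem card_mul_factorial_le_choose_mul {k : ℕ} (ha : 1 ≤ a) :
    #F * n.factorial ≤ n.choose (n / 2) *
      (Nat.card {p : Equiv.Perm (Fin n) × (Fin (k + 1) → Finset (Fin n)) //
        IsMarkedChain F a p.1 p.2} + k * a * n.factorial) := by
  refine (card_mul_factorial_le_sum_card_memChain F).trans (Nat.mul_le_mul_left _ ?_)
  calc ∑ σ, #{A ∈ F | memChain σ A}
      ≤ ∑ σ : Equiv.Perm (Fin n), ((#(chainSizes F σ) - k * a) + k * a) :=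
        sum_le_sum fun σ _ => by rw [← card_chainSizes]; exact le_tsub_add
    _ = ∑ σ, (#(chainSizes F σ) - k * a) + k * a * n.factorial := by
        rw [sum_add_distrib, sum_const, card_univ, Fintype.card_perm, Fintype.card_fin,
          smul_eq_mul, mul_comm n.factorial]
    _ ≤ _ := Nat.add_le_add_right (sum_card_chainSizes_sub_le_card_isMarkedChain F a ha) _

theorem mul_factorial_lt_card_isMarkedChain {k : ℕ} (ha : 1 ≤ a) {ε : ℝ}
    (hF : (k * a + ε) * n.choose (n / 2) < #F) :
    ε * n.factorial < Nat.card {p : Equiv.Perm (Fin n) × (Fin (k + 1) → Finset (Fin n)) //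
      IsMarkedChain F a p.1 p.2} := by
  have hcount : (#F * n.factorial : ℝ) ≤ n.choose (n / 2) *
      (Nat.card {p : Equiv.Perm (Fin n) × (Fin (k + 1) → Finset (Fin n)) //
        IsMarkedChain F a p.1 p.2} + k * a * n.factorial) := by
    exact_mod_cast card_mul_factorial_le_choose_mul F a ha
  have hC : (0 : ℝ) < n.choose (n / 2) := by exact_mod_cast Nat.choose_pos (Nat.div_le_self n 2)
  have hfact : (0 : ℝ) < n.factorial := by exact_mod_cast n.factorial_pos
  refine lt_of_mul_lt_mul_left ?_ hC.le
  nlinarith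

end Markers

/-- If `|F| > ((k-1)·a + ε)·C(n, ⌊n/2⌋)`, then the number of `(k,a)`-marked chains
whose markers all lie in `F` is at least `(ε/k)·n!`.  A `(k,a)`-marked chain is a
maximal chain `M` of `2^[n]` (encoded by a permutation of `[n]`) together with
markers `F₁ ⊋ F₂ ⊋ ⋯ ⊋ F_k` in `M` with `|F_i \ F_{i+1}| ≥ a`. -/
theorem stmt3 (k a n : ℕ) (hk : 1 ≤ k) (ha : 1 ≤ a) (ε : ℝ) (hε : 0 < ε)
    (F : Finset (Finset (Fin n)))
    (hF : (((k : ℝ) - 1) * a + ε) * n.choose (n / 2) < F.card) :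
    (ε / k) * n.factorial ≤
      Nat.card {p : Equiv.Perm (Fin n) × (Fin k → Finset (Fin n)) //
        (∀ i, memChain p.1 (p.2 i)) ∧
        (∀ i, p.2 i ∈ F) ∧
        (∀ i j : Fin k, i < j → p.2 j ⊂ p.2 i) ∧
        (∀ i j : Fin k, (j : ℕ) = (i : ℕ) + 1 → a ≤ (p.2 i \ p.2 j).card)} := by
  obtain ⟨k, rfl⟩ := Nat.exists_eq_add_of_le' hk
  have hmarked := mul_factorial_lt_card_isMarkedChain F a ha (k := k) (by simpa using hF)
  calc ε / ((k + 1 : ℕ) : ℝ) * n.factorial ≤ ε * n.factorial := by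
        gcongr
        exact div_le_self hε.le (by simp)
    _ ≤ _ := hmarked.le
end

section
/- Let P be a finite poset whose Hasse diagram is a tree and in which every maximal chain has exactly k elements (P is graded of height k). Then there exist maximal chains C₁, …, C_ℓ of P such that: (i) for every j ∈ [ℓ], the union C₁ ∪ ⋯ ∪ C_j, with the induced order, is a graded poset of height k, and C₁ ∪ ⋯ ∪ C_ℓ = P; (ii) for every 1 < j ≤ ℓ, the set I_j = C_j \ (C₁ ∪ ⋯ ∪ C_{j-1}) is a nonempty interval of P containing a minimal or maximal element of P; (iii) for every 1 < j ≤ ℓ, C_j \ I_j ⊆ C_i for some i < j. -/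
open Set OrderDual

namespace SimpleGraph

variable {V : Type*} {G : SimpleGraph V}

/-- For an edge `s u` of a tree, the vertices on the `u` side of that edge. -/
def beyond (G : SimpleGraph V) (s u : V) : Set V := {x | ∃ p : G.Walk u x, s ∉ p.support}

lemma mem_beyond_self {s u : V} (h : s ≠ u) : u ∈ G.beyond s u :=
  ⟨.nil, by simpa using h⟩

lemma notMem_beyond {s u : V} : s ∉ G.beyond s u :=
  fun ⟨p, hp⟩ => hp p.end_mem_support

lemma mem_beyond_of_adj {s u x y : V} (hx : x ∈ G.beyond s u) (hxy : G.Adj x y) (hy : y ≠ s) :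
    y ∈ G.beyond s u := by
  obtain ⟨p, hp⟩ := hx
  exact ⟨p.concat hxy, by simp [Walk.support_concat, hp, hy.symm]⟩

lemma beyond_ssubset {s u a c : V} (ha : a ∈ G.beyond s u) (hac : G.Adj a c)
    (hs : s ∉ G.beyond a c) : G.beyond a c ⊂ G.beyond s u := by
  classical
  have hcs : c ≠ s := fun h => hs (h ▸ mem_beyond_self hac.ne)
  refine (ssubset_iff_of_subset ?_).2 ⟨a, ha, notMem_beyond⟩
  rintro x ⟨q, hq⟩
  obtain ⟨p, hp⟩ := mem_beyond_of_adj ha hac hcs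
  have hsq : s ∉ q.support := fun h =>
    hs ⟨q.takeUntil s h, fun h' => hq (q.support_takeUntil_subset_support h h')⟩
  exact ⟨p.append q, by
    simpa [Walk.support_append, hp] using fun h => hsq (List.mem_of_mem_tail h)⟩

lemma IsAcyclic.mem_support_of_adj (hG : G.IsAcyclic) {a c₁ c₂ : V} (h₁ : G.Adj a c₁)
    (h₂ : G.Adj a c₂) (hne : c₁ ≠ c₂) (p : G.Walk c₂ c₁) : a ∈ p.support := by
  have hbridge := isBridge_iff_forall_walk_mem_edges.1 (isAcyclic_iff_forall_adj_isBridge.1 hG h₁)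
    (.cons h₂ p)
  rw [Walk.edges_cons, List.mem_cons, Sym2.eq_iff] at hbridge
  rcases hbridge with (⟨-, h⟩ | ⟨-, h⟩) | h
  · exact absurd h hne
  · exact absurd h h₁.ne.symm
  · exact p.fst_mem_support_of_mem_edges h

lemma IsAcyclic.notMem_beyond_or_notMem_beyond (hG : G.IsAcyclic) {a c₁ c₂ : V}
    (h₁ : G.Adj a c₁) (h₂ : G.Adj a c₂) (hne : c₁ ≠ c₂) (s : V) :
    s ∉ G.beyond a c₁ ∨ s ∉ G.beyond a c₂ := by
  by_contra! ⟨⟨p₁, hp₁⟩, ⟨p₂, hp₂⟩⟩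
  have := hG.mem_support_of_adj h₁ h₂ hne (p₂.append p₁.reverse)
  simp only [Walk.support_append, Walk.support_reverse, List.tail_reverse, List.mem_append, hp₂,
    List.mem_reverse, false_or] at this
  exact hp₁ (List.mem_of_mem_dropLast this)

/-- Take a fork `F s u w` with the fewest vertices beyond `(s, u)`: a fork beyond it would yield one
with strictly fewer. -/
theorem IsAcyclic.exists_forall_not_beyond [Finite V] (hG : G.IsAcyclic) (F : V → V → V → Prop)
    (hF : ∀ ⦃a c₁ c₂⦄, F a c₁ c₂ → G.Adj a c₁ ∧ G.Adj a c₂ ∧ c₁ ≠ c₂)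
    (hF_symm : ∀ ⦃a c₁ c₂⦄, F a c₁ c₂ → F a c₂ c₁) (hex : ∃ a c₁ c₂, F a c₁ c₂) :
    ∃ s u w, F s u w ∧ ∀ a ∈ G.beyond s u, ∀ c₁ c₂, ¬ F a c₁ c₂ := by
  obtain ⟨a, c₁, c₂, h⟩ := hex
  obtain ⟨⟨s, u⟩, ⟨w, hsuw⟩, hmin⟩ := exists_min_image {q : V × V | ∃ w, F q.1 q.2 w}
    (fun q => (G.beyond q.1 q.2).ncard) (toFinite _) ⟨(a, c₁), c₂, h⟩
  refine ⟨s, u, w, hsuw, fun a ha c₁ c₂ hF' => ?_⟩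
  obtain ⟨c, c', hc, hs⟩ : ∃ c c', F a c c' ∧ s ∉ G.beyond a c := by
    obtain ⟨h₁, h₂, hne⟩ := hF hF'
    rcases hG.notMem_beyond_or_notMem_beyond h₁ h₂ hne s with hs | hs
    exacts [⟨c₁, c₂, hF', hs⟩, ⟨c₂, c₁, hF_symm hF', hs⟩]
  have := ncard_lt_ncard (beyond_ssubset ha (hF hc).1 hs) (toFinite _)
  exact (hmin (a, c) ⟨c', hc⟩).not_gt this

/-- Entering and leaving `Y` would visit `s` twice. -/
lemma Walk.IsPath.notMem_of_forall_adj {Y : Set V} {s : V}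
    (hY : ∀ a b, G.Adj a b → a ∈ Y → b ∉ Y → b = s) :
    ∀ {x y : V} (p : G.Walk x y), p.IsPath → x ∉ Y → y ∉ Y → ∀ z ∈ p.support, z ∉ Y
  | _, _, .nil, _, hx, _, z, hz => by simp_all
  | x, y, .cons (v := v) h q, hp, hx, hy, z, hz => by
    rw [Walk.cons_isPath_iff] at hp
    have hv : v ∉ Y := by
      intro hv
      obtain ⟨d, hd, hd₁, hd₂⟩ := q.exists_boundary_dart Y hv hy
      have hds : d.snd = s := hY _ _ d.adj hd₁ hd₂
      exact hp.2 (hY v x h.symm hv hx ▸ hds ▸ q.dart_snd_mem_support_of_mem_darts hd)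
    rw [Walk.support_cons, List.mem_cons] at hz
    rcases hz with rfl | hz
    exacts [hx, hp.1.notMem_of_forall_adj hY q hv hy z hz]

lemma IsTree.induce_compl {Y : Set V} {s : V} (hG : G.IsTree)
    (hY : ∀ a b, G.Adj a b → a ∈ Y → b ∉ Y → b = s) (hs : s ∉ Y) : (G.induce Yᶜ).IsTree := by
  refine ⟨(connected_iff _).2 ⟨?_, ⟨⟨s, hs⟩⟩⟩, hG.isAcyclic.induce _⟩
  rintro ⟨x, hx⟩ ⟨y, hy⟩
  obtain ⟨p, hp⟩ := hG.connected.preconnected.exists_isPath x y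
  exact ⟨p.induce Yᶜ (hp.notMem_of_forall_adj hY p hx hy)⟩

end SimpleGraph

section Chains

variable {α β : Type*} [Preorder α] [Preorder β]

lemma IsMaxChain.mem_of_forall_le_or_ge {c : Set α} (hc : IsMaxChain (· ≤ ·) c) {a : α}
    (ha : ∀ b ∈ c, a ≤ b ∨ b ≤ a) : a ∈ c :=
  hc.2 (hc.1.insert fun b hb _ => ha b hb) (subset_insert a c) ▸ mem_insert a c

lemma IsChain.isMaxChain_of_forall {c : Set α} (hc : IsChain (· ≤ ·) c)
    (h : ∀ a, (∀ b ∈ c, a ≤ b ∨ b ≤ a) → a ∈ c) : IsMaxChain (· ≤ ·) c :=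
  ⟨hc, fun _ ht hct => hct.antisymm fun a ha => h a fun _ hb => ht.total ha (hct hb)⟩

variable (α) in
def IsGradedOfHeight (k : ℕ) : Prop := ∀ D : Set α, IsMaxChain (· ≤ ·) D → D.ncard = k

lemma IsGradedOfHeight.of_orderIso {k : ℕ} (e : α ≃o β) (h : IsGradedOfHeight α k) :
    IsGradedOfHeight β k := fun D hD => by
  rw [← h _ (hD.image e.symm), ncard_image_of_injective _ e.symm.injective]

lemma IsGradedOfHeight.dual {k : ℕ} (h : IsGradedOfHeight α k) : IsGradedOfHeight αᵒᵈ k :=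
  fun D hD => h D hD.symm

end Chains

section Poset

variable {P : Type*} [PartialOrder P]

def hasseOrderDualIso : hasse Pᵒᵈ ≃g hasse P where
  toEquiv := OrderDual.ofDual
  map_rel_iff' := by simp [hasse, ofDual_covBy_ofDual_iff, or_comm]

lemma hasse_subtype (S : Set P) [S.OrdConnected] : hasse S = (hasse P).induce S := by
  ext a b
  have key : ∀ x y : S, x.1 ⋖ y.1 ↔ x ⋖ y := fun x y =>
    Set.OrdConnected.apply_covBy_apply_iff (OrderEmbedding.subtype (· ∈ S)) (by simpa)
  simp [hasse, key]

def IsFork (a c₁ c₂ : P) : Prop := c₁ ≠ c₂ ∧ (a ⋖ c₁ ∧ a ⋖ c₂ ∨ c₁ ⋖ a ∧ c₂ ⋖ a)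

def IsForkFree (a : P) : Prop := ∀ c₁ c₂, ¬ IsFork a c₁ c₂

lemma isForkFree_toDual {a : P} : IsForkFree (toDual a) ↔ IsForkFree a := by
  simp [IsForkFree, IsFork, OrderDual.forall, toDual_covBy_toDual_iff, or_comm]

variable [Finite P]

lemma IsForkFree.le_of_covBy_of_lt {x y c : P} (hy : IsForkFree y) (hc : c ⋖ y) (hxy : x < y) :
    x ≤ c := by
  obtain ⟨d, hxd, hdy⟩ := exists_le_covBy_of_lt hxy
  by_cases hcd : c = d
  · exact hcd ▸ hxd
  · exact absurd ⟨hcd, .inr ⟨hc, hdy⟩⟩ (hy c d)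

lemma IsForkFree.le_of_lt_of_covBy {x y c : P} (hx : IsForkFree x) (hc : x ⋖ c) (hxy : x < y) :
    c ≤ y := by
  obtain ⟨d, hxd, hdy⟩ := exists_covBy_le_of_lt hxy
  by_cases hcd : c = d
  · exact hcd ▸ hdy
  · exact absurd ⟨hcd, .inl ⟨hc, hxd⟩⟩ (hx c d)

lemma isChain_Ici_of_isForkFree {u : P} (h : ∀ a, u ≤ a → IsForkFree a) :
    IsChain (· ≤ ·) (Ici u) := by
  suffices ∀ x, u ≤ x → ∀ z, u ≤ z → x ≤ z ∨ z ≤ x from fun x hx z hz _ => this x hx z hz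
  intro x
  induction x using WellFoundedLT.induction with
  | _ x ih =>
  intro hx z hz
  rcases hx.eq_or_lt with rfl | hux
  · exact .inl hz
  obtain ⟨c, huc, hcx⟩ := exists_le_covBy_of_lt hux
  rcases ih c hcx.lt huc z hz with hcz | hzc
  · rcases hcz.eq_or_lt with rfl | hcz
    · exact .inr hcx.le
    · exact .inl ((h c huc).le_of_lt_of_covBy hcx hcz)
  · exact .inr (hzc.trans hcx.le)

/-- The elements comparable with `x` are closed under covers in a fork-free poset. -/
lemma exists_isFork_of_not_isChain (hconn : (hasse P).Connected)
    (hP : ¬ IsChain (· ≤ ·) (univ : Set P)) : ∃ a c₁ c₂ : P, IsFork a c₁ c₂ := by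
  by_contra! hfree
  refine hP fun x _ y _ _ => of_not_not fun hxy => ?_
  obtain ⟨p⟩ := hconn.preconnected x y
  obtain ⟨d, -, hd₁, hd₂⟩ := p.exists_boundary_dart {z | x ≤ z ∨ z ≤ x} (.inl le_rfl) hxy
  apply hd₂
  rcases hd₁ with hxa | hax <;> rcases d.adj with hab | hba
  · exact .inl (hxa.trans hab.le)
  · rcases hxa.eq_or_lt with hxa | hxa
    · exact .inr (hxa ▸ hba.le)
    · exact .inl (IsForkFree.le_of_covBy_of_lt (hfree _) hba hxa)
  · rcases hax.eq_or_lt with hax | hax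
    · exact .inl (hax ▸ hab.le)
    · exact .inr (IsForkFree.le_of_lt_of_covBy (hfree _) hab hax)
  · exact .inr (hba.le.trans hax)

lemma Ici_subset_beyond {s u : P} (h : s < u) : Ici u ⊆ (hasse P).beyond s u := by
  intro x hx
  induction x using WellFoundedLT.induction with
  | _ x ih =>
  rcases (show u ≤ x from hx).eq_or_lt with rfl | hux
  · exact SimpleGraph.mem_beyond_self h.ne
  obtain ⟨c, huc, hcx⟩ := exists_le_covBy_of_lt hux
  exact SimpleGraph.mem_beyond_of_adj (ih c hcx.lt huc) (.inl hcx) (h.trans_le hx).ne'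

lemma Iic_subset_beyond {s u : P} (h : u < s) : Iic u ⊆ (hasse P).beyond s u := by
  intro x hx
  induction x using WellFoundedGT.induction with
  | _ x ih =>
  rcases (show x ≤ u from hx).eq_or_lt with rfl | hxu
  · exact SimpleGraph.mem_beyond_self h.ne'
  obtain ⟨c, hxc, hcu⟩ := exists_covBy_le_of_lt hxu
  exact SimpleGraph.mem_beyond_of_adj (ih c hxc.lt hcu) (.inr hxc) (hx.trans_lt h).ne

/-- The up-set `Ici u` is a chain attached to the rest of `P` only through the edge `s ⋖ u`, and
`s` has an upper cover outside it. -/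
structure IsPendantChain (s u : P) : Prop where
  covBy : s ⋖ u
  isChain : IsChain (· ≤ ·) (Ici u)
  eq_of_covBy : ∀ ⦃x y⦄, x ⋖ y → u ≤ y → ¬ u ≤ x → x = s
  exists_lt : ∃ w, s < w ∧ ¬ u ≤ w

lemma IsPendantChain.of_isForkFree {s u w : P} (hsu : s ⋖ u) (hsw : s ⋖ w) (huw : u ≠ w)
    (h : ∀ a, u ≤ a → IsForkFree a) : IsPendantChain s u where
  covBy := hsu
  isChain := isChain_Ici_of_isForkFree h
  eq_of_covBy x y hxy huy hux := by
    rcases huy.eq_or_lt with rfl | huy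
    · by_contra hxs
      exact h u le_rfl x s ⟨hxs, .inr ⟨hxy, hsu⟩⟩
    · exact absurd ((h y huy.le).le_of_covBy_of_lt hxy huy) hux
  exists_lt := ⟨w, hsw.lt, fun hle => huw (hle.eq_or_lt.resolve_right (hsw.2 hsu.lt))⟩

theorem exists_isPendantChain (htree : (hasse P).IsTree) (hP : ¬ IsChain (· ≤ ·) (univ : Set P)) :
    ∃ s u : P, IsPendantChain s u ∨ IsPendantChain (toDual s) (toDual u) := by
  obtain ⟨s, u, w, ⟨huw, ⟨hsu, hsw⟩ | ⟨hus, hws⟩⟩, hfree⟩ :=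
    htree.isAcyclic.exists_forall_not_beyond IsFork
      (fun a c₁ c₂ h => ⟨h.2.imp And.left And.left, h.2.imp And.right And.right, h.1⟩)
      (fun a c₁ c₂ h => ⟨h.1.symm, h.2.imp And.symm And.symm⟩)
      (exists_isFork_of_not_isChain htree.connected hP)
  · exact ⟨s, u, .inl <| .of_isForkFree hsu hsw huw fun a ha =>
      hfree a (Ici_subset_beyond hsu.lt ha)⟩
  · refine ⟨s, u, .inr <| .of_isForkFree (w := toDual w) hus.toDual hws.toDual (by simpa)
      fun a ha => ?_⟩
    exact (isForkFree_toDual (P := P)).2 (hfree (ofDual a) (Iic_subset_beyond hus.lt ha))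

end Poset


section Cover

variable {P : Type*} [PartialOrder P] {k ℓ : ℕ}

/-- Conditions (i)–(iii) for maximal chains `C 0, …, C (ℓ - 1)` of `P` whose union is `S`. -/
structure IsChainCover (S : Set P) (k ℓ : ℕ) (C : ℕ → Set P) : Prop where
  one_le : 1 ≤ ℓ
  isMaxChain : ∀ j < ℓ, IsMaxChain (· ≤ ·) (C j)
  isGradedOfHeight : ∀ j < ℓ, IsGradedOfHeight ↥(⋃ i ≤ j, C i) k
  iUnion_eq : ⋃ i < ℓ, C i = S
  nonempty : ∀ j < ℓ, 0 < j → (C j \ ⋃ i < j, C i).Nonempty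
  exists_eq_Icc : ∀ j < ℓ, 0 < j → ∃ x y, x ≤ y ∧ C j \ ⋃ i < j, C i = Icc x y
  exists_isMin_or_isMax : ∀ j < ℓ, 0 < j → ∃ z ∈ C j \ ⋃ i < j, C i, IsMin z ∨ IsMax z
  exists_subset : ∀ j < ℓ, 0 < j → ∃ i < j, C j ∩ ⋃ i' < j, C i' ⊆ C i

lemma IsChainCover.of_isChain (hP : IsGradedOfHeight P k)
    (hchain : IsChain (· ≤ ·) (univ : Set P)) :
    IsChainCover univ k 1 (fun _ => (univ : Set P)) := by
  have hU : ∀ j : ℕ, ⋃ i ≤ j, (univ : Set P) = univ := fun j =>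
    eq_univ_of_forall fun _ => mem_iUnion₂.2 ⟨j, le_refl j, trivial⟩
  refine ⟨le_rfl, fun _ _ => ⟨hchain, fun _ _ h => (univ_subset_iff.1 h).symm⟩, fun j _ => ?_,
    eq_univ_of_forall fun _ => mem_iUnion₂.2 ⟨0, Nat.one_pos, trivial⟩, ?_, ?_, ?_, ?_⟩
  · rw [hU]
    exact hP.of_orderIso OrderIso.Set.univ.symm
  all_goals intro j hj h0; omega

lemma IsChainCover.snoc {S F : Set P} {D : ℕ → Set P} (hD : IsChainCover S k ℓ D)
    (hP : IsGradedOfHeight P k) (hF : IsMaxChain (· ≤ ·) F) (hSF : S ∪ F = univ)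
    (hne : (F \ S).Nonempty) (hIcc : ∃ x y, x ≤ y ∧ F \ S = Icc x y)
    (hz : ∃ z ∈ F \ S, IsMin z ∨ IsMax z) {i₀ : ℕ} (hi₀ : i₀ < ℓ) (hsub : F ∩ S ⊆ D i₀) :
    IsChainCover univ k (ℓ + 1) (Function.update D ℓ F) := by
  set C := Function.update D ℓ F
  have hC : ∀ j < ℓ, C j = D j := fun j hj => Function.update_of_ne hj.ne _ _
  have hCℓ : C ℓ = F := Function.update_self ..
  have hlt : ∀ j ≤ ℓ, ⋃ i < j, C i = ⋃ i < j, D i := fun j hj =>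
    iUnion₂_congr fun i hi => hC i (hi.trans_le hj)
  have hle : ∀ j < ℓ, ⋃ i ≤ j, C i = ⋃ i ≤ j, D i := fun j hj =>
    iUnion₂_congr fun i hi => hC i (hi.trans_lt hj)
  have hnew : ∀ j < ℓ, C j \ ⋃ i < j, C i = D j \ ⋃ i < j, D i := fun j hj => by
    rw [hC j hj, hlt j hj.le]
  have hnewℓ : C ℓ \ ⋃ i < ℓ, C i = F \ S := by rw [hCℓ, hlt ℓ le_rfl, hD.iUnion_eq]
  have huniv : ⋃ i < ℓ + 1, C i = univ := by
    rw [biUnion_lt_succ, hlt ℓ le_rfl, hD.iUnion_eq, hCℓ, hSF]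
  refine ⟨by omega, Nat.forall_lt_succ_right.2 ⟨fun j hj => ?_, hCℓ ▸ hF⟩,
    Nat.forall_lt_succ_right.2 ⟨fun j hj => ?_, ?_⟩, huniv,
    Nat.forall_lt_succ_right.2 ⟨fun j hj h0 => ?_, fun _ => hnewℓ ▸ hne⟩,
    Nat.forall_lt_succ_right.2 ⟨fun j hj h0 => ?_, fun _ => hnewℓ ▸ hIcc⟩,
    Nat.forall_lt_succ_right.2 ⟨fun j hj h0 => ?_, fun _ => hnewℓ ▸ hz⟩,
    Nat.forall_lt_succ_right.2 ⟨fun j hj h0 => ?_, fun _ => ⟨i₀, hi₀, ?_⟩⟩⟩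
  · rw [hC j hj]; exact hD.isMaxChain j hj
  · rw [hle j hj]; exact hD.isGradedOfHeight j hj
  · have : ⋃ i ≤ ℓ, C i = ⋃ i < ℓ + 1, C i := by simp only [Nat.lt_succ_iff]
    rw [this, huniv]
    exact hP.of_orderIso OrderIso.Set.univ.symm
  · rw [hnew j hj]; exact hD.nonempty j hj h0
  · rw [hnew j hj]; exact hD.exists_eq_Icc j hj h0
  · rw [hnew j hj]; exact hD.exists_isMin_or_isMax j hj h0
  · obtain ⟨i, hi, h⟩ := hD.exists_subset j hj h0
    exact ⟨i, hi, by rwa [hC j hj, hlt j hj.le, hC i (hi.trans hj)]⟩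
  · rwa [hCℓ, hlt ℓ le_rfl, hD.iUnion_eq, hC i₀ hi₀]

def OrderDual.subtypeOrderIso (S : Set Pᵒᵈ) : ↥(toDual ⁻¹' S) ≃o (↥S)ᵒᵈ where
  toFun x := toDual ⟨toDual x.1, x.2⟩
  invFun x := ⟨ofDual (ofDual x).1, (ofDual x).2⟩
  left_inv _ := rfl
  right_inv _ := rfl
  map_rel_iff' := Iff.rfl

lemma IsChainCover.of_orderDual {S : Set Pᵒᵈ} {C : ℕ → Set Pᵒᵈ} (h : IsChainCover S k ℓ C) :
    IsChainCover (toDual ⁻¹' S) k ℓ (fun j => toDual ⁻¹' C j) := by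
  have hnew : ∀ j, toDual ⁻¹' C j \ ⋃ i < j, toDual ⁻¹' C i = toDual ⁻¹' (C j \ ⋃ i < j, C i) :=
    fun j => by rw [preimage_sdiff, preimage_iUnion₂]
  refine ⟨h.one_le, fun j hj => (h.isMaxChain j hj).symm, fun j hj => ?_, ?_,
    fun j hj h0 => ?_, fun j hj h0 => ?_, fun j hj h0 => ?_, fun j hj h0 => ?_⟩
  · rw [← preimage_iUnion₂]
    exact (h.isGradedOfHeight j hj).dual.of_orderIso (OrderDual.subtypeOrderIso _).symm
  · rw [← preimage_iUnion₂, h.iUnion_eq]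
  · rw [hnew]
    exact (h.nonempty j hj h0).preimage toDual.surjective
  · obtain ⟨x, y, hxy, he⟩ := h.exists_eq_Icc j hj h0
    exact ⟨ofDual y, ofDual x, hxy, by rw [hnew, he, Icc_ofDual]⟩
  · obtain ⟨z, hz, hmin⟩ := h.exists_isMin_or_isMax j hj h0
    exact ⟨ofDual z, by rwa [hnew], hmin.symm.imp isMin_ofDual_iff.2 isMax_ofDual_iff.2⟩
  · obtain ⟨i, hi, hsub⟩ := h.exists_subset j hj h0
    exact ⟨i, hi, by rw [← preimage_iUnion₂, ← preimage_inter]; exact preimage_mono hsub⟩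

end Cover

section Pendant

variable {P : Type*} [PartialOrder P] {k : ℕ}

instance ordConnected_compl_Ici (a : P) : (Ici a)ᶜ.OrdConnected :=
  (isUpperSet_Ici a).compl.ordConnected

noncomputable def Subtype.imageValOrderIso {S : Set P} (U : Set S) : U ≃o ↥(Subtype.val '' U) :=
  { Equiv.Set.image _ U Subtype.val_injective with map_rel_iff' := Iff.rfl }

lemma IsLowerSet.isMin_val {S : Set P} (hS : IsLowerSet S) {z : S} (hz : IsMin z) :
    IsMin (z : P) :=
  isMin_iff_forall_not_lt.2 fun y hy => hz.not_lt (b := ⟨y, hS hy.le z.2⟩) hy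

namespace IsPendantChain

variable {s u : P}

lemma isTree_hasse_compl (h : IsPendantChain s u) (htree : (hasse P).IsTree) :
    (hasse ↥(Ici u)ᶜ).IsTree := by
  rw [hasse_subtype]
  refine htree.induce_compl (fun a b hab ha hb => ?_) h.covBy.lt.not_ge
  exact hab.elim (fun hab => absurd (le_trans ha hab.le) hb) fun hba => h.eq_of_covBy hba ha hb

variable [Finite P]

lemma le_of_lt (h : IsPendantChain s u) {x y : P} (hx : ¬ u ≤ x) (hxy : x < y) (hy : u ≤ y) :
    x ≤ s := by
  induction y using WellFoundedLT.induction with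
  | _ y ih =>
  obtain ⟨c, hxc, hcy⟩ := exists_le_covBy_of_lt hxy
  by_cases huc : u ≤ c
  · exact ih c hcy.lt (hxc.lt_of_ne fun e => hx (e ▸ huc)) huc
  · exact h.eq_of_covBy hcy hy huc ▸ hxc

lemma isMax_val (h : IsPendantChain s u) {z : ↥(Ici u)ᶜ} (hz : IsMax z) : IsMax (z : P) := by
  refine isMax_iff_forall_not_lt.2 fun y hzy => ?_
  obtain ⟨c, hzc, hcy⟩ := exists_covBy_le_of_lt hzy
  by_cases huc : u ≤ c
  · obtain ⟨w, hsw, hw⟩ := h.exists_lt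
    exact hz.not_lt (b := ⟨w, hw⟩) (show (z : P) < w by rw [h.eq_of_covBy hzc huc z.2]; exact hsw)
  · exact hz.not_lt (b := ⟨c, huc⟩) hzc.lt

lemma isMaxChain_image (h : IsPendantChain s u) {D : Set ↥(Ici u)ᶜ}
    (hD : IsMaxChain (· ≤ ·) D) : IsMaxChain (· ≤ ·) (Subtype.val '' D) := by
  refine ((Subtype.mono_coe _).isChain_image hD.1).isMaxChain_of_forall fun x hx => ?_
  have hcomp : ∀ d ∈ D, x ≤ d ∨ (d : P) ≤ x := fun d hd => hx d (mem_image_of_mem _ hd)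
  by_cases hux : u ≤ x
  · obtain ⟨w, hsw, hw⟩ := h.exists_lt
    have hDs : ∀ d ∈ D, (d : P) ≤ s := fun d hd => (hcomp d hd).elim
      (fun hxd => absurd (hux.trans hxd) d.2)
      fun hdx => h.le_of_lt d.2 (hdx.lt_of_ne fun e => d.2 (e ▸ hux)) hux
    have hwD : ⟨w, hw⟩ ∈ D := hD.mem_of_forall_le_or_ge fun d hd => .inr ((hDs d hd).trans hsw.le)
    exact absurd hsw (hDs _ hwD).not_gt
  · exact ⟨⟨x, hux⟩, hD.mem_of_forall_le_or_ge hcomp, rfl⟩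

lemma isGradedOfHeight_compl (h : IsPendantChain s u) (hP : IsGradedOfHeight P k) :
    IsGradedOfHeight ↥(Ici u)ᶜ k := fun D hD => by
  rw [← ncard_image_of_injective D Subtype.val_injective]
  exact hP _ (h.isMaxChain_image hD)

lemma isMaxChain_union (h : IsPendantChain s u) {C : Set ↥(Ici u)ᶜ}
    (hC : IsMaxChain (· ≤ ·) C) (hs : s ∈ Subtype.val '' C) :
    IsMaxChain (· ≤ ·) (Ici u ∪ (Subtype.val '' C ∩ Iic s)) := by
  have hchain : IsChain (· ≤ ·) (Ici u ∪ (Subtype.val '' C ∩ Iic s)) :=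
    isChain_union.2 ⟨h.isChain, ((Subtype.mono_coe _).isChain_image hC.1).mono inter_subset_left,
      fun a ha b hb _ => .inr (hb.2.trans (h.covBy.le.trans ha))⟩
  refine hchain.isMaxChain_of_forall fun x hx => ?_
  by_cases hux : u ≤ x
  · exact .inl hux
  have hxs : x ≤ s := (hx u (.inl le_rfl)).elim
    (fun hxu => h.le_of_lt hux (hxu.lt_of_ne fun e => hux e.ge) le_rfl) (absurd · hux)
  obtain ⟨s', hs', rfl⟩ := hs
  refine .inr ⟨⟨⟨x, hux⟩, hC.mem_of_forall_le_or_ge fun c hc => ?_, rfl⟩, hxs⟩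
  by_cases hcs : (c : P) ≤ s'
  · exact hx c (.inr ⟨mem_image_of_mem _ hc, hcs⟩)
  · exact .inl (hxs.trans ((hC.1.total hs' hc).resolve_right hcs))

lemma exists_isMax_Ici_eq_Icc (h : IsPendantChain s u) :
    ∃ v, u ≤ v ∧ IsMax v ∧ Ici u = Icc u v := by
  obtain ⟨v, hv⟩ := (toFinite (Ici u)).exists_maximal nonempty_Ici
  have hle : ∀ z, u ≤ z → z ≤ v := fun z hz => (h.isChain.total hz hv.1).elim id (hv.2 hz)
  exact ⟨v, hv.1, fun b hvb => hle b (hv.1.trans hvb),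
    ext fun z => ⟨fun hz => ⟨hz, hle z hz⟩, And.left⟩⟩

lemma isChainCover_image (h : IsPendantChain s u) {ℓ : ℕ} {C : ℕ → Set ↥(Ici u)ᶜ}
    (hC : IsChainCover univ k ℓ C) : IsChainCover (Ici u)ᶜ k ℓ (fun j => Subtype.val '' C j) := by
  have hnew : ∀ j, Subtype.val '' C j \ ⋃ i < j, Subtype.val '' C i =
      Subtype.val '' (C j \ ⋃ i < j, C i) := fun j => by
    rw [image_sdiff Subtype.val_injective, image_iUnion₂]
  refine ⟨hC.one_le, fun j hj => h.isMaxChain_image (hC.isMaxChain j hj), fun j hj => ?_, ?_,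
    fun j hj h0 => ?_, fun j hj h0 => ?_, fun j hj h0 => ?_, fun j hj h0 => ?_⟩
  · rw [← image_iUnion₂]
    exact (hC.isGradedOfHeight j hj).of_orderIso (Subtype.imageValOrderIso _)
  · rw [← image_iUnion₂, hC.iUnion_eq, image_univ, Subtype.range_coe]
  · rw [hnew]
    exact (hC.nonempty j hj h0).image _
  · obtain ⟨x, y, hxy, he⟩ := hC.exists_eq_Icc j hj h0
    exact ⟨x, y, hxy, by rw [hnew, he, image_subtype_val_Icc]⟩
  · obtain ⟨z, hz, hm⟩ := hC.exists_isMin_or_isMax j hj h0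
    exact ⟨z, hnew j ▸ mem_image_of_mem _ hz,
      hm.imp (isUpperSet_Ici u).compl.isMin_val h.isMax_val⟩
  · obtain ⟨i, hi, hsub⟩ := hC.exists_subset j hj h0
    refine ⟨i, hi, ?_⟩
    rw [← image_iUnion₂, ← image_inter Subtype.val_injective]
    exact image_mono hsub

lemma exists_isChainCover (h : IsPendantChain s u) (hP : IsGradedOfHeight P k) {ℓ : ℕ}
    {C : ℕ → Set ↥(Ici u)ᶜ} (hC : IsChainCover univ k ℓ C) :
    ∃ ℓ' C', IsChainCover (univ : Set P) k ℓ' C' := by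
  have hD := h.isChainCover_image hC
  have hs : s ∈ ⋃ i < ℓ, Subtype.val '' C i := by
    rw [hD.iUnion_eq]
    exact h.covBy.lt.not_ge
  obtain ⟨i₀, hi₀, hs⟩ := mem_iUnion₂.1 hs
  obtain ⟨v, huv, hv, hIcc⟩ := h.exists_isMax_Ici_eq_Icc
  have hnew : (Ici u ∪ (Subtype.val '' C i₀ ∩ Iic s)) \ (Ici u)ᶜ = Ici u := by
    rw [Set.sdiff_compl, union_inter_cancel_left]
  refine ⟨ℓ + 1, _, hD.snoc hP (h.isMaxChain_union (hC.isMaxChain i₀ hi₀) hs) ?_ ?_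
    ⟨u, v, huv, hnew.trans hIcc⟩ ⟨v, by rw [hnew]; exact huv, .inr hv⟩ hi₀ ?_⟩
  · exact eq_univ_of_forall fun x => (em (u ≤ x)).elim (fun hx => .inr (.inl hx)) .inl
  · rw [hnew]
    exact nonempty_Ici
  · exact fun x ⟨hxF, hx⟩ => hxF.elim (absurd · hx) (·.1)

end IsPendantChain

end Pendant

theorem exists_isChainCover {P : Type*} [PartialOrder P] [Finite P] {k : ℕ}
    (htree : (hasse P).IsTree) (hP : IsGradedOfHeight P k) :
    ∃ ℓ C, IsChainCover (univ : Set P) k ℓ C := by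
  induction hn : Nat.card P using Nat.strong_induction_on generalizing P with
  | _ n ih =>
  have step : ∀ {R : Type _} [PartialOrder R] [Finite R], Nat.card R = n → (hasse R).IsTree →
      IsGradedOfHeight R k → ∀ {s u : R}, IsPendantChain s u →
      ∃ ℓ C, IsChainCover (univ : Set R) k ℓ C := by
    intro R _ _ hR htree hP s u h
    obtain ⟨ℓ, C, hC⟩ := ih _ (hR ▸ Finite.card_subtype_lt (x := u) (by simp))
      (h.isTree_hasse_compl htree) (h.isGradedOfHeight_compl hP) rfl
    exact h.exists_isChainCover hP hC
  by_cases hchain : IsChain (· ≤ ·) (univ : Set P)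
  · exact ⟨1, _, .of_isChain hP hchain⟩
  obtain ⟨s, u, h | h⟩ := exists_isPendantChain htree hchain
  · exact step hn htree hP h
  · obtain ⟨ℓ, C, hC⟩ := step (R := Pᵒᵈ) hn (hasseOrderDualIso.isTree_iff.2 htree) hP.dual h
    exact ⟨ℓ, _, hC.of_orderDual⟩

/-- A graded tree poset of height `k` (every maximal chain has exactly `k`
elements and the Hasse diagram is a tree) admits a graded chain cover: maximal
chains `C₀, …, C_{ℓ-1}` such that (i) each partial union is graded of height `k`
(as an induced subposet) and the total union is `P`; (ii) for `j ≥ 1`,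
`I_j = C_j \ (C₀ ∪ ⋯ ∪ C_{j-1})` is a nonempty interval containing a minimal or
maximal element of `P`; (iii) for `j ≥ 1`, `C_j \ I_j ⊆ C_i` for some `i < j`. -/
theorem stmt11 {P : Type*} [PartialOrder P] [Fintype P] (k : ℕ)
    (htree : (hasse P).IsTree)
    (hgraded : ∀ C : Set P, IsMaxChain (· ≤ ·) C → C.ncard = k) :
    ∃ ℓ : ℕ, 1 ≤ ℓ ∧ ∃ C : ℕ → Set P,
      (∀ j < ℓ, IsMaxChain (· ≤ ·) (C j)) ∧
      (∀ j < ℓ, ∀ D : Set (↥(⋃ i ≤ j, C i)),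
        IsMaxChain (· ≤ ·) D → D.ncard = k) ∧
      (⋃ i < ℓ, C i) = Set.univ ∧
      (∀ j, 0 < j → j < ℓ →
        (C j \ ⋃ i < j, C i).Nonempty ∧
        (∃ x y : P, x ≤ y ∧ C j \ (⋃ i < j, C i) = Set.Icc x y) ∧
        (∃ z ∈ C j \ ⋃ i < j, C i, IsMin z ∨ IsMax z)) ∧
      (∀ j, 0 < j → j < ℓ → ∃ i < j, (C j ∩ ⋃ i' < j, C i') ⊆ C i) := by
  obtain ⟨ℓ, C, hC⟩ := exists_isChainCover htree hgraded
  exact ⟨ℓ, hC.one_le, C, hC.isMaxChain, hC.isGradedOfHeight, hC.iUnion_eq,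
    fun j h0 hj => ⟨hC.nonempty j hj h0, hC.exists_eq_Icc j hj h0,
      hC.exists_isMin_or_isMax j hj h0⟩,
    fun j h0 hj => hC.exists_subset j hj h0⟩
end

section
/- Let F ⊆ 2^[n] with |F| > (2+ε)·C(n, ⌊n/2⌋) for some ε > 0. Then for n sufficiently large, F contains four distinct sets A, B, C, D with A ⊊ B, A ⊊ C, D ⊊ C, and moreover one can require additionally a fifth set E with D ⊊ E (i.e., F contains a copy of a 5-element 'fence' path poset of height 2). -/
/-!
A numbering of `X` is a maximal chain of subsets, namely its prefixes. If `F` contains no fence,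
every member of `F` lying strictly above another member has at most two strict supersets in `F`.
Keep only the members `G` of size at most `n - k`. The minimal elements of `G` form an antichain,
so by Sperner there are at most `C(n, n/2)` of them. For the other elements `x`, a chain through
`x` meets a given strict superset `T ∈ G` with probability `1 / C(n - |x|, |T| - |x|) ≤ 1 / k`, so
it meets one of them with probability at most `2 / k`; otherwise `x` is the top element of `G` on
the chain, which happens for at most one `x` per chain. Double counting chains then bounds the
non-minimal part by `k / (k - 2) · C(n, n/2)`. The at most `k (n + 1)^k` members of size greater
than `n - k` are negligible against `C(n, n/2) ≥ 2^n / (n + 1)`.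
-/

open Finset Fintype
open scoped Nat

lemma Finset.card_subtype_mem_of_subset {α : Type*} [DecidableEq α] {s t : Finset α} (hst : s ⊆ t) :
    #(s.subtype (· ∈ t)) = #s := by
  rw [card_subtype, filter_true_of_mem hst]

namespace Numbering

variable {X : Type*} [Fintype X] [DecidableEq X] {s t : Finset X}

lemma val_prefixedEquiv_fst_apply (f : prefixed t) (y : t) :
    ((prefixedEquiv t f).1 y : ℕ) = f.1 y := rfl

lemma isPrefix_prefixedEquiv_fst_iff (f : prefixed t) (hst : s ⊆ t) :
    IsPrefix (prefixedEquiv t f).1 (s.subtype (· ∈ t)) ↔ IsPrefix f.1 s := by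
  have hcard := card_subtype_mem_of_subset hst
  refine ⟨fun h x => ?_, fun h x => by simpa [hcard, val_prefixedEquiv_fst_apply] using h x⟩
  by_cases hx : x ∈ t
  · simpa [hcard, val_prefixedEquiv_fst_apply] using h ⟨x, hx⟩
  · have hts : #s ≤ #t := card_le_card hst
    have := (mem_prefixed.1 f.2 x).not.1 hx
    exact iff_of_false (fun hxs => hx (hst hxs)) (by omega)

lemma card_prefixed_inter_prefixed (hst : s ⊆ t) :
    #(prefixed s ∩ prefixed t) = (#s)! * (#t - #s)! * (card X - #t)! := by
  have hcard := card_subtype_mem_of_subset hst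
  have e : {f : prefixed t // IsPrefix f.1 s} ≃ _ :=
    ((prefixedEquiv t).subtypeEquiv (q := fun g => IsPrefix g.1 (s.subtype (· ∈ t)))
      fun f => (isPrefix_prefixedEquiv_fst_iff f hst).symm).trans
        (Equiv.prodSubtypeFstEquivSubtypeProd (p := fun g => IsPrefix g (s.subtype (· ∈ t))))
  calc #(prefixed s ∩ prefixed t) = Fintype.card {f : prefixed t // IsPrefix f.1 s} := by
        rw [← Fintype.card_coe (prefixed s ∩ prefixed t)]
        exact Fintype.card_congr <|
          (Equiv.subtypeEquivRight (q := fun f => f ∈ prefixed t ∧ IsPrefix f s)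
            (by simp [and_comm])).trans (Equiv.subtypeSubtypeEquivSubtypeInter _ _).symm
    _ = #(prefixed (s.subtype (· ∈ t))) * (card X - #t)! := by
        rw [Fintype.card_congr e, Fintype.card_prod, Fintype.card_subtype, card_numbering,
          Fintype.card_coe tᶜ, card_compl]
        rfl
    _ = (#s)! * (#t - #s)! * (card X - #t)! := by
        rw [card_prefixed, hcard, Fintype.card_coe t]

lemma factorial_le_choose_mul_card_prefixed (s : Finset X) :
    (card X)! ≤ (card X).choose (card X / 2) * #(prefixed s) := by
  rw [card_prefixed, ← mul_assoc, ← Nat.choose_mul_factorial_mul_factorial s.card_le_univ]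
  exact Nat.mul_le_mul_right _ (Nat.mul_le_mul_right _ (Nat.choose_le_middle _ _))

lemma mul_card_prefixed_inter_le {k : ℕ} (hst : s ⊂ t) (ht : #t + k ≤ card X) :
    k * #(prefixed s ∩ prefixed t) ≤ #(prefixed s) := by
  have hlt : #s < #t := card_lt_card hst
  -- `#(prefixed s) / #(prefixed s ∩ prefixed t) = C(n - #s, #t - #s) ≥ n - #t + 1`
  have hchoose : k ≤ (card X - #s).choose (#t - #s) := by
    rw [← Nat.choose_symm (by omega)]
    calc k ≤ (card X - #t + 1).choose (card X - #t) := by rw [Nat.choose_succ_self_right]; omega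
      _ ≤ (card X - #s).choose (card X - #s - (#t - #s)) := by
        rw [show card X - #s - (#t - #s) = card X - #t by omega]
        exact Nat.choose_le_choose _ (by omega)
  have hfac : (card X - #s).choose (#t - #s) * (#t - #s)! * (card X - #t)! = (card X - #s)! := by
    rw [← Nat.choose_mul_factorial_mul_factorial (show #t - #s ≤ card X - #s by omega),
      show card X - #s - (#t - #s) = card X - #t by omega]
  rw [card_prefixed_inter_prefixed hst.subset, card_prefixed, ← hfac]
  calc k * ((#s)! * (#t - #s)! * (card X - #t)!)
      ≤ (card X - #s).choose (#t - #s) * ((#s)! * (#t - #s)! * (card X - #t)!) :=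
        Nat.mul_le_mul_right _ hchoose
    _ = (#s)! * ((card X - #s).choose (#t - #s) * (#t - #s)! * (card X - #t)!) := by ring

lemma sum_card_filter_not_exists_ssuperset_le (M : Finset (Finset X)) :
    ∑ x ∈ M, #{f ∈ prefixed x | ¬∃ T ∈ M, x ⊂ T ∧ IsPrefix f T} ≤ (card X)! := by
  rw [← card_biUnion]
  · exact (card_le_univ _).trans_eq card_numbering
  intro x hx y hy hxy
  simp only [Function.onFun, disjoint_left, mem_filter, mem_prefixed, not_exists, not_and]
  rintro f ⟨hfx, hx_top⟩ hfy hy_top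
  rcases le_total #x #y with hle | hle
  · exact hx_top y hy ((hfx.subset_of_card_le_card hfy hle).ssubset_of_ne hxy) hfy
  · exact hy_top x hx ((hfy.subset_of_card_le_card hfx hle).ssubset_of_ne hxy.symm) hfx

lemma mul_card_filter_exists_ssuperset_le {M : Finset (Finset X)} {k : ℕ}
    (hM : ∀ T ∈ M, #T + k ≤ card X) (x : Finset X) :
    k * #{f ∈ prefixed x | ∃ T ∈ M, x ⊂ T ∧ IsPrefix f T} ≤ #{T ∈ M | x ⊂ T} * #(prefixed x) := by
  have hsub : {f ∈ prefixed x | ∃ T ∈ M, x ⊂ T ∧ IsPrefix f T} ⊆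
      {T ∈ M | x ⊂ T}.biUnion fun T => prefixed x ∩ prefixed T := by
    intro f hf
    simp only [mem_filter] at hf
    obtain ⟨hfx, T, hT, hxT, hfT⟩ := hf
    exact mem_biUnion.2 ⟨T, mem_filter.2 ⟨hT, hxT⟩, mem_inter.2 ⟨hfx, mem_prefixed.2 hfT⟩⟩
  calc k * #{f ∈ prefixed x | ∃ T ∈ M, x ⊂ T ∧ IsPrefix f T}
      ≤ ∑ T ∈ {T ∈ M | x ⊂ T}, k * #(prefixed x ∩ prefixed T) := by
        rw [← mul_sum]; exact Nat.mul_le_mul_left _ ((card_le_card hsub).trans card_biUnion_le)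
    _ ≤ ∑ _T ∈ {T ∈ M | x ⊂ T}, #(prefixed x) := by
        refine sum_le_sum fun T hT => ?_
        rw [mem_filter] at hT
        exact mul_card_prefixed_inter_le hT.2 (hM T hT.1)
    _ = #{T ∈ M | x ⊂ T} * #(prefixed x) := by rw [sum_const, smul_eq_mul]

end Numbering

theorem exists_fence_of_two_lt_card_ssupersets {α : Type*} [DecidableEq α]
    {F : Finset (Finset α)} {A x : Finset α} (hA : A ∈ F) (hx : x ∈ F) (hAx : A ⊂ x)
    (h : 2 < #{T ∈ F | x ⊂ T}) :
    ∃ A B C D E : Finset α,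
      A ∈ F ∧ B ∈ F ∧ C ∈ F ∧ D ∈ F ∧ E ∈ F ∧
      A ≠ B ∧ A ≠ C ∧ A ≠ D ∧ A ≠ E ∧ B ≠ C ∧ B ≠ D ∧ B ≠ E ∧
      C ≠ D ∧ C ≠ E ∧ D ≠ E ∧
      A ⊂ B ∧ A ⊂ C ∧ D ⊂ C ∧ D ⊂ E := by
  obtain ⟨T₁, T₂, T₃, h₁, h₂, h₃, h₁₂, h₁₃, h₂₃⟩ := two_lt_card_iff.1 h
  simp only [mem_filter] at h₁ h₂ h₃
  have hA₁ := hAx.trans h₁.2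
  have hA₂ := hAx.trans h₂.2
  have hA₃ := hAx.trans h₃.2
  exact ⟨A, T₃, T₁, x, T₂, hA, h₃.1, h₁.1, hx, h₂.1, hA₃.ne, hA₁.ne, hAx.ne, hA₂.ne, h₁₃.symm,
    h₃.2.ne', h₂₃.symm, h₁.2.ne', h₁₂, h₂.2.ne, hA₃, hA₁, h₁.2, h₂.2⟩

section

variable {X : Type*} [Fintype X] [DecidableEq X]

open Numbering

theorem card_le_of_card_ssupersets_le_two {M : Finset (Finset X)} {k : ℕ}
    (hM : ∀ T ∈ M, #T + k ≤ card X) (hsup : ∀ x ∈ M, #{T ∈ M | x ⊂ T} ≤ 2) :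
    (k - 2) * #M ≤ k * (card X).choose (card X / 2) := by
  set m := (card X).choose (card X / 2)
  set S := ∑ x ∈ M, #(prefixed x)
  have hsplit : ∀ x ∈ M, #(prefixed x) = #{f ∈ prefixed x | ∃ T ∈ M, x ⊂ T ∧ IsPrefix f T}
      + #{f ∈ prefixed x | ¬∃ T ∈ M, x ⊂ T ∧ IsPrefix f T} :=
    fun x _ => (card_filter_add_card_filter_not _).symm
  have hup : ∀ x ∈ M, k * #{f ∈ prefixed x | ∃ T ∈ M, x ⊂ T ∧ IsPrefix f T} ≤ 2 * #(prefixed x) :=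
    fun x hx => (mul_card_filter_exists_ssuperset_le hM x).trans
      (Nat.mul_le_mul_right _ (hsup x hx))
  have hS : k * S ≤ 2 * S + k * (card X)! := by
    calc k * S = ∑ x ∈ M, (k * #{f ∈ prefixed x | ∃ T ∈ M, x ⊂ T ∧ IsPrefix f T}
          + k * #{f ∈ prefixed x | ¬∃ T ∈ M, x ⊂ T ∧ IsPrefix f T}) := by
          rw [mul_sum]; exact sum_congr rfl fun x hx => by rw [hsplit x hx, mul_add]
      _ = ∑ x ∈ M, k * #{f ∈ prefixed x | ∃ T ∈ M, x ⊂ T ∧ IsPrefix f T}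
          + k * ∑ x ∈ M, #{f ∈ prefixed x | ¬∃ T ∈ M, x ⊂ T ∧ IsPrefix f T} := by
          rw [sum_add_distrib, mul_sum]
      _ ≤ ∑ x ∈ M, 2 * #(prefixed x) + k * (card X)! :=
          add_le_add (sum_le_sum hup)
            (Nat.mul_le_mul_left _ (sum_card_filter_not_exists_ssuperset_le M))
      _ = 2 * S + k * (card X)! := by rw [mul_sum]
  have hLYM : #M * (card X)! ≤ m * S := by
    rw [mul_sum, Finset.card_eq_sum_ones, sum_mul]
    exact sum_le_sum fun x _ => by simpa using factorial_le_choose_mul_card_prefixed x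
  have hS' : (k - 2) * S ≤ k * (card X)! := by rw [Nat.sub_mul]; omega
  refine Nat.le_of_mul_le_mul_right ?_ (Nat.factorial_pos (card X))
  calc (k - 2) * #M * (card X)! ≤ (k - 2) * (m * S) := by
        rw [mul_assoc]; exact Nat.mul_le_mul_left _ hLYM
    _ = m * ((k - 2) * S) := by ring
    _ ≤ m * (k * (card X)!) := Nat.mul_le_mul_left _ hS'
    _ = k * m * (card X)! := by ring

theorem card_filter_card_add_le_of_card_ssupersets_le_two {F : Finset (Finset X)} {k : ℕ}
    (hF : ∀ x ∈ F, (∃ A ∈ F, A ⊂ x) → #{T ∈ F | x ⊂ T} ≤ 2) (hk : 2 < k) :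
    (#{x ∈ F | #x + k ≤ card X} : ℝ) ≤ (2 + 2 / (k - 2)) * (card X).choose (card X / 2) := by
  set G := {x ∈ F | #x + k ≤ card X}
  set m := (card X).choose (card X / 2)
  have hGF : G ⊆ F := filter_subset _ _
  have hmin : #{x ∈ G | ¬∃ A ∈ G, A ⊂ x} ≤ m := by
    refine IsAntichain.sperner fun x hx y hy hxy hsub => ?_
    simp only [coe_filter, Set.mem_ofPred_eq] at hx hy
    exact hy.2 ⟨x, hx.1, hsub.ssubset_of_ne hxy⟩
  have hmid : (k - 2) * #{x ∈ G | ∃ A ∈ G, A ⊂ x} ≤ k * m := by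
    refine card_le_of_card_ssupersets_le_two
      (fun T hT => (mem_filter.1 (mem_filter.1 hT).1).2) fun x hx => ?_
    obtain ⟨hxG, A, hAG, hAx⟩ := mem_filter.1 hx
    refine (card_le_card (filter_subset_filter _ ((filter_subset _ _).trans hGF))).trans ?_
    exact hF x (hGF hxG) ⟨A, hGF hAG, hAx⟩
  have hk' : (0 : ℝ) < k - 2 := by rw [sub_pos]; exact_mod_cast hk
  have hmid' : (#{x ∈ G | ∃ A ∈ G, A ⊂ x} : ℝ) ≤ (1 + 2 / (k - 2)) * m := by
    have h := (Nat.cast_le (α := ℝ)).2 hmid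
    push_cast [Nat.cast_sub hk.le] at h
    rw [show (1 + 2 / ((k : ℝ) - 2)) * m = k * m / (k - 2) by field_simp; ring,
      le_div_iff₀ hk']
    linarith
  have hmin' : (#{x ∈ G | ¬∃ A ∈ G, A ⊂ x} : ℝ) ≤ m := by exact_mod_cast hmin
  rw [← card_filter_add_card_filter_not (fun x => ∃ A ∈ G, A ⊂ x), Nat.cast_add]
  linarith

lemma card_filter_lt_card_add_le (F : Finset (Finset X)) (k : ℕ) :
    #{x ∈ F | card X < #x + k} ≤ k * (card X + 1) ^ k := by
  calc #{x ∈ F | card X < #x + k}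
      ≤ #((range k).biUnion fun j => powersetCard j (univ : Finset X)) := by
        refine card_le_card_of_injOn compl (fun x hx => ?_) compl_injective.injOn
        simp only [coe_filter, Set.mem_ofPred_eq] at hx
        have := x.card_le_univ
        simp only [coe_biUnion, coe_range, Set.mem_iUnion, Set.mem_Iio, mem_coe,
          mem_powersetCard_univ, card_compl]
        exact ⟨_, by omega, rfl⟩
    _ ≤ ∑ j ∈ range k, #(powersetCard j (univ : Finset X)) := card_biUnion_le
    _ ≤ ∑ _j ∈ range k, (card X + 1) ^ k := by
        refine sum_le_sum fun j hj => ?_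
        rw [card_powersetCard, card_univ]
        calc (card X).choose j ≤ (card X + 1) ^ j :=
              (Nat.choose_le_pow _ _).trans (Nat.pow_le_pow_left (Nat.le_succ _) _)
          _ ≤ (card X + 1) ^ k := Nat.pow_le_pow_right (Nat.succ_pos _) (mem_range.1 hj).le
    _ = k * (card X + 1) ^ k := by rw [sum_const, Finset.card_range, smul_eq_mul]

end

lemma two_pow_le_succ_mul_choose_half (n : ℕ) : 2 ^ n ≤ (n + 1) * n.choose (n / 2) := by
  rw [← Nat.sum_range_choose]
  calc ∑ i ∈ range (n + 1), n.choose i ≤ ∑ _i ∈ range (n + 1), n.choose (n / 2) :=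
        sum_le_sum fun i _ => Nat.choose_le_middle i n
    _ = (n + 1) * n.choose (n / 2) := by rw [sum_const, Finset.card_range, smul_eq_mul]

open Filter Asymptotics in
lemma eventually_mul_pow_le_mul_choose_half (k : ℕ) {c : ℝ} (hc : 0 < c) :
    ∀ᶠ n : ℕ in atTop, (k : ℝ) * (n + 1) ^ k ≤ c * n.choose (n / 2) := by
  have hshift := (isLittleO_pow_const_const_pow_of_one_lt (R := ℝ) (k + 1) one_lt_two).comp_tendsto
    (tendsto_add_atTop_nat 1)
  have ho : (fun n : ℕ => (k : ℝ) * ((n : ℝ) + 1) ^ (k + 1)) =o[atTop] fun n => (2 : ℝ) ^ n := by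
    refine IsLittleO.const_mul_left (IsLittleO.of_const_mul_right (c := (2 : ℝ)) ?_) _
    simpa [Function.comp_def, pow_succ, mul_comm] using hshift
  filter_upwards [ho.bound hc] with n hn
  have h2 : (2 : ℝ) ^ n ≤ (n + 1) * n.choose (n / 2) := by
    exact_mod_cast two_pow_le_succ_mul_choose_half n
  rw [Real.norm_of_nonneg (by positivity), Real.norm_of_nonneg (by positivity)] at hn
  refine le_of_mul_le_mul_right ?_ (by positivity : (0 : ℝ) < n + 1)
  calc (k : ℝ) * (n + 1) ^ k * (n + 1) = k * (n + 1) ^ (k + 1) := by ring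
    _ ≤ c * 2 ^ n := hn
    _ ≤ c * ((n + 1) * n.choose (n / 2)) := by gcongr
    _ = c * n.choose (n / 2) * (n + 1) := by ring

/-- If `|F| > (2+ε)·C(n, ⌊n/2⌋)` for fixed `ε > 0` and `n` sufficiently large,
then `F ⊆ 2^[n]` contains five distinct sets `A, B, C, D, E` with `A ⊊ B`,
`A ⊊ C`, `D ⊊ C` and `D ⊊ E`, i.e. a copy of the 5-element fence poset of
height 2. -/
theorem stmt14 (ε : ℝ) (hε : 0 < ε) :
    ∃ N : ℕ, ∀ n ≥ N, ∀ F : Finset (Finset (Fin n)),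
      (2 + ε) * (n.choose (n / 2) : ℝ) < (F.card : ℝ) →
      ∃ A B C D E : Finset (Fin n),
        A ∈ F ∧ B ∈ F ∧ C ∈ F ∧ D ∈ F ∧ E ∈ F ∧
        A ≠ B ∧ A ≠ C ∧ A ≠ D ∧ A ≠ E ∧ B ≠ C ∧ B ≠ D ∧ B ≠ E ∧
        C ≠ D ∧ C ≠ E ∧ D ≠ E ∧
        A ⊂ B ∧ A ⊂ C ∧ D ⊂ C ∧ D ⊂ E := by
  obtain ⟨k, hk, hkε⟩ : ∃ k : ℕ, 2 < k ∧ 2 / ((k : ℝ) - 2) ≤ ε / 2 := by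
    obtain ⟨j, hj⟩ := exists_nat_gt (4 / ε)
    refine ⟨j + 3, by omega, ?_⟩
    calc 2 / (((j + 3 : ℕ) : ℝ) - 2) ≤ 2 / (4 / ε) := by
          gcongr
          push_cast; linarith
      _ = ε / 2 := by field_simp; ring
  obtain ⟨N, hN⟩ := Filter.eventually_atTop.1 (eventually_mul_pow_le_mul_choose_half k (half_pos hε))
  refine ⟨N, fun n hn F hF => ?_⟩
  by_contra hfree
  have hsup : ∀ x ∈ F, (∃ A ∈ F, A ⊂ x) → #{T ∈ F | x ⊂ T} ≤ 2 := fun x hx ⟨A, hA, hAx⟩ =>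
    not_lt.1 fun h => hfree (exists_fence_of_two_lt_card_ssupersets hA hx hAx h)
  have hlow := card_filter_card_add_le_of_card_ssupersets_le_two hsup hk
  have hhigh := card_filter_lt_card_add_le F k
  have hsplit := card_filter_add_card_filter_not (s := F) (fun x => #x + k ≤ card (Fin n))
  simp only [Fintype.card_fin, not_le] at hlow hhigh hsplit
  have hhigh' : (#{x ∈ F | n < #x + k} : ℝ) ≤ ε / 2 * n.choose (n / 2) :=
    le_trans (by exact_mod_cast hhigh) (hN n hn)
  have hlow' : (2 + 2 / ((k : ℝ) - 2)) * n.choose (n / 2) ≤ (2 + ε / 2) * n.choose (n / 2) := by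
    gcongr
  rw [← hsplit, Nat.cast_add] at hF
  linarith
end
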